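/- arXiv:math/0610043 — 3 statements merged into one kernel-verified Lean document; each statement's English description precedes it below -/
import Mathlib

section
/- Let A be an abelian category and let f : F^{-1} → F^0 be a morphism in A, regarded as a cochain complex F• concentrated in degrees -1 and 0. If Ext_A^2(coker f, ker f) = 0, then in the derived category D(A) the complex F• is isomorphic to the direct sum of its cohomology objects, namely (ker f)[1] ⊕ (coker f), where ker f is placed in degree -1 and coker f in degree 0. -/
open CategoryTheory CategoryTheory.Limits ZeroObject

universe w v u

/-- The cochain complex concentrated in degrees `-1` and `0`, given there by a morphism
`f : X ⟶ Y`. -/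
noncomputable def twoTermComplex {A : Type u} [Category.{v} A] [Abelian A] {X Y : A}
    (f : X ⟶ Y) : CochainComplex A ℤ where
  X i := if i = -1 then X else if i = 0 then Y else 0
  d i j :=
    if h : i = -1 ∧ j = 0 then
      eqToHom (by rw [h.1]; simp) ≫ f ≫ eqToHom (by rw [h.2]; simp)
    else 0
  shape i j hij := by
    try dsimp only
    rw [dif_neg]
    rintro ⟨hi, hj⟩
    exact hij (by (try simp only [ComplexShape.up_Rel]); omega)
  d_comp_d' i j k _ _ := by
    beta_reduce
    by_cases h : i = -1 ∧ j = 0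
    · have hne : ¬(j = -1 ∧ k = 0) := by omega
      rw [dif_neg hne, comp_zero]
    · rw [dif_neg h, zero_comp]

namespace TwoTermAux

open HomologicalComplex DerivedCategory

variable {A : Type u} [Category.{v} A] [Abelian A] {X Y X' Y' : A}

lemma X_m1 (f : X ⟶ Y) : (twoTermComplex f).X (-1) = X := by simp [twoTermComplex]

lemma X_0 (f : X ⟶ Y) : (twoTermComplex f).X 0 = Y := by simp [twoTermComplex]

lemma isZero_X (f : X ⟶ Y) {i : ℤ} (h1 : i ≠ -1) (h0 : i ≠ 0) :
    IsZero ((twoTermComplex f).X i) := by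
  have : (twoTermComplex f).X i = 0 := by simp [twoTermComplex, if_neg h1, if_neg h0]
  rw [this]
  exact isZero_zero A

lemma d_m1_0 (f : X ⟶ Y) :
    (twoTermComplex f).d (-1) 0 = eqToHom (X_m1 f) ≫ f ≫ eqToHom (X_0 f).symm := by
  dsimp only [twoTermComplex]
  rw [dif_pos ⟨rfl, rfl⟩]

lemma d_eq_zero (f : X ⟶ Y) {i j : ℤ} (h : ¬(i = -1 ∧ j = 0)) :
    (twoTermComplex f).d i j = 0 := by
  simp [twoTermComplex, dif_neg h]
  rfl

/-- A morphism of two-term complexes from a commuting square. -/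
noncomputable def twoTermMap (f : X ⟶ Y) (f' : X' ⟶ Y') (a : X ⟶ X') (b : Y ⟶ Y')
    (w : f ≫ b = a ≫ f') : twoTermComplex f ⟶ twoTermComplex f' where
  f i :=
    if h1 : i = -1 then
      eqToHom (by rw [h1]; exact X_m1 f) ≫ a ≫ eqToHom (by rw [h1]; exact (X_m1 f').symm)
    else if h0 : i = 0 then
      eqToHom (by rw [h0]; exact X_0 f) ≫ b ≫ eqToHom (by rw [h0]; exact (X_0 f').symm)
    else 0
  comm' i j hij := by
    by_cases h : i = -1 ∧ j = 0
    · obtain ⟨rfl, rfl⟩ := h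
      rw [d_m1_0, d_m1_0, dif_pos rfl, dif_neg (by norm_num), dif_pos rfl]
      simp only [Category.assoc, eqToHom_trans_assoc, eqToHom_refl, Category.id_comp]
      rw [reassoc_of% w]
    · rw [d_eq_zero f h, d_eq_zero f' h, zero_comp, comp_zero]

lemma twoTermMap_f_m1 (f : X ⟶ Y) (f' : X' ⟶ Y') (a : X ⟶ X') (b : Y ⟶ Y')
    (w : f ≫ b = a ≫ f') :
    (twoTermMap f f' a b w).f (-1) = eqToHom (X_m1 f) ≫ a ≫ eqToHom (X_m1 f').symm := by
  simp [twoTermMap]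

lemma twoTermMap_f_0 (f : X ⟶ Y) (f' : X' ⟶ Y') (a : X ⟶ X') (b : Y ⟶ Y')
    (w : f ≫ b = a ≫ f') :
    (twoTermMap f f' a b w).f 0 = eqToHom (X_0 f) ≫ b ≫ eqToHom (X_0 f').symm := by
  simp [twoTermMap]

variable (f : X ⟶ Y)

/-- The inclusion of the subcomplex `X ⟶ Abelian.image f`. -/
noncomputable def ιTwoTerm : twoTermComplex (Abelian.factorThruImage f) ⟶ twoTermComplex f :=
  twoTermMap _ _ (𝟙 X) (Abelian.image.ι f) (by simp)

/-- The projection to the single complex `cokernel f` in degree `0`. -/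
noncomputable def πTwoTerm :
    twoTermComplex f ⟶ (single A (ComplexShape.up ℤ) 0).obj (cokernel f) :=
  mkHomToSingle (eqToHom (X_0 f) ≫ cokernel.π f) (by
    rintro i hi
    obtain rfl : i = -1 := by simp only [ComplexShape.up_Rel] at hi; omega
    rw [d_m1_0]
    simp)

lemma kernelι_comp_factorThruImage : kernel.ι f ≫ Abelian.factorThruImage f = 0 := by
  rw [← cancel_mono (Abelian.image.ι f), Category.assoc, Abelian.image.fac,
    kernel.condition, zero_comp]

/-- The quasi-isomorphism from the single complex `kernel f` in degree `-1`. -/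
noncomputable def αTwoTerm :
    (single A (ComplexShape.up ℤ) (-1)).obj (kernel f) ⟶
      twoTermComplex (Abelian.factorThruImage f) :=
  mkHomFromSingle (kernel.ι f ≫ eqToHom (X_m1 (Abelian.factorThruImage f)).symm) (by
    rintro j hj
    obtain rfl : j = 0 := by simp only [ComplexShape.up_Rel] at hj; omega
    rw [d_m1_0]
    simp [kernelι_comp_factorThruImage f, reassoc_of% (kernelι_comp_factorThruImage f)])

/-- The short exact sequence of complexes. -/
noncomputable def ses : ShortComplex (CochainComplex A ℤ) :=
  ShortComplex.mk (ιTwoTerm f) (πTwoTerm f) (by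
    apply HomologicalComplex.hom_ext
    intro i
    by_cases h0 : i = 0
    · subst h0
      simp [ιTwoTerm, πTwoTerm, twoTermMap_f_0, mkHomToSingle_f]
    · apply (isZero_single_obj_X (ComplexShape.up ℤ) 0 (cokernel f) i h0).eq_of_tgt)

lemma ses_shortExact : (ses f).ShortExact := by
  apply HomologicalComplex.shortExact_of_degreewise_shortExact
  intro i
  by_cases h1 : i = -1
  · subst h1
    have hz := isZero_single_obj_X (ComplexShape.up ℤ) 0 (cokernel f) (-1) (by norm_num)
    haveI hmono : Mono (((ses f).map (HomologicalComplex.eval A (ComplexShape.up ℤ) (-1))).f) := by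
      change Mono ((ιTwoTerm f).f (-1))
      rw [ιTwoTerm, twoTermMap_f_m1]
      infer_instance
    haveI hepi : Epi (((ses f).map (HomologicalComplex.eval A (ComplexShape.up ℤ) (-1))).g) :=
      ⟨fun u v _ => hz.eq_of_src u v⟩
    refine ⟨?_⟩
    rw [ShortComplex.exact_iff_epi _ (hz.eq_of_tgt _ _)]
    change Epi ((ιTwoTerm f).f (-1))
    rw [ιTwoTerm, twoTermMap_f_m1]
    infer_instance
  · by_cases h0 : i = 0
    · subst h0
      haveI hmono : Mono (((ses f).map (HomologicalComplex.eval A (ComplexShape.up ℤ) 0)).f) := by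
        change Mono ((ιTwoTerm f).f 0)
        rw [ιTwoTerm, twoTermMap_f_0]
        infer_instance
      haveI hepi : Epi (((ses f).map (HomologicalComplex.eval A (ComplexShape.up ℤ) 0)).g) := by
        change Epi ((πTwoTerm f).f 0)
        rw [πTwoTerm, mkHomToSingle_f]
        infer_instance
      refine ⟨?_⟩
      apply ShortComplex.exact_of_iso
        (S₁ := ShortComplex.mk (kernel.ι (cokernel.π f)) (cokernel.π f) (kernel.condition _))
      · exact ShortComplex.isoMk (eqToIso (X_0 (Abelian.factorThruImage f)).symm)
          (eqToIso (X_0 f).symm)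
          ((singleObjXSelf (ComplexShape.up ℤ) 0 (cokernel f)).symm)
          (by change (eqToIso (X_0 (Abelian.factorThruImage f)).symm).hom ≫ (ιTwoTerm f).f 0 = kernel.ι (cokernel.π f) ≫ (eqToIso (X_0 f).symm).hom; rw [ιTwoTerm, twoTermMap_f_0]; simp [Abelian.image.ι])
          (by change (eqToIso (X_0 f).symm).hom ≫ (πTwoTerm f).f 0 = cokernel.π f ≫ (singleObjXSelf (ComplexShape.up ℤ) 0 (cokernel f)).inv; rw [πTwoTerm, mkHomToSingle_f]; simp)
      · exact ShortComplex.exact_of_f_is_kernel _ (kernelIsKernel (cokernel.π f))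
    · have hzs := isZero_single_obj_X (ComplexShape.up ℤ) 0 (cokernel f) i h0
      haveI : Mono (((ses f).map (HomologicalComplex.eval A (ComplexShape.up ℤ) i)).f) :=
        ⟨fun u v _ => (isZero_X (Abelian.factorThruImage f) h1 h0).eq_of_tgt u v⟩
      haveI : Epi (((ses f).map (HomologicalComplex.eval A (ComplexShape.up ℤ) i)).g) :=
        ⟨fun u v _ => hzs.eq_of_src u v⟩
      exact ⟨ShortComplex.exact_of_isZero_X₂ _ (isZero_X f h1 h0)⟩



/-- `kernel.ι f` is a kernel of `Abelian.factorThruImage f`. -/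
noncomputable def kernelForkIsLimit :
    IsLimit (KernelFork.ofι (kernel.ι f) (kernelι_comp_factorThruImage f)) :=
  KernelFork.IsLimit.ofι _ _
    (fun k hk => kernel.lift f k (by
      rw [← Abelian.image.fac f, reassoc_of% hk, zero_comp]))
    (fun k hk => by simp)
    (fun k hk m hm => by rw [← cancel_mono (kernel.ι f), hm]; simp)

instance quasiIso_αTwoTerm : QuasiIso (αTwoTerm f) := by
  rw [quasiIso_iff]
  intro i
  by_cases h1 : i = -1
  · subst h1
    rw [quasiIsoAt_iff' _ (-2) (-1) 0 (by simp) (by simp)]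
    refine (ShortComplex.quasiIso_iff_of_zeros _ ?_ ?_ ?_).2 ⟨?_, ?_⟩
    · apply (isZero_single_obj_X (ComplexShape.up ℤ) (-1) (kernel f) (-2) (by norm_num)).eq_of_src
    · apply (isZero_single_obj_X (ComplexShape.up ℤ) (-1) (kernel f) 0 (by norm_num)).eq_of_tgt
    · exact d_eq_zero (Abelian.factorThruImage f) (i := -2) (j := -1) (by omega)
    · refine ShortComplex.exact_of_iso ?_
        (ShortComplex.exact_of_f_is_kernel
          (ShortComplex.mk (kernel.ι f) (Abelian.factorThruImage f)
            (kernelι_comp_factorThruImage f)) (kernelForkIsLimit f))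
      refine ShortComplex.isoMk
        (by exact (singleObjXSelf (ComplexShape.up ℤ) (-1) (kernel f)).symm)
        (by exact eqToIso (X_m1 (Abelian.factorThruImage f)).symm)
        (by exact eqToIso (X_0 (Abelian.factorThruImage f)).symm) ?_ ?_
      · change (singleObjXSelf (ComplexShape.up ℤ) (-1) (kernel f)).inv ≫ (αTwoTerm f).f (-1) =
          kernel.ι f ≫ (eqToIso (X_m1 (Abelian.factorThruImage f)).symm).hom
        dsimp [αTwoTerm]
        rw [mkHomFromSingle_f]
        simp
      · change (eqToIso (X_m1 (Abelian.factorThruImage f)).symm).hom ≫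
          (twoTermComplex (Abelian.factorThruImage f)).d (-1) 0 =
          Abelian.factorThruImage f ≫ (eqToIso (X_0 (Abelian.factorThruImage f)).symm).hom
        rw [d_m1_0]
        simp
    · change Mono ((αTwoTerm f).f (-1))
      dsimp [αTwoTerm]
      rw [mkHomFromSingle_f]
      exact mono_comp _ _
  · by_cases h0 : i = 0
    · subst h0
      rw [quasiIsoAt_iff_exactAt _ 0 (by
        rw [HomologicalComplex.exactAt_iff' _ (-1) 0 1 (by simp) (by simp)]
        exact ShortComplex.exact_of_isZero_X₂ _
          (by exact isZero_single_obj_X (ComplexShape.up ℤ) (-1) (kernel f) 0 (by norm_num)))]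
      rw [HomologicalComplex.exactAt_iff' _ (-1) 0 1 (by simp) (by simp)]
      rw [ShortComplex.exact_iff_epi _
        ((isZero_X (Abelian.factorThruImage f) (i := 1) (by omega) (by omega)).eq_of_tgt _ _)]
      change Epi ((twoTermComplex (Abelian.factorThruImage f)).d (-1) 0)
      rw [d_m1_0]
      exact epi_comp _ _
    · rw [quasiIsoAt_iff_exactAt _ i (by
        rw [HomologicalComplex.exactAt_iff' _ (i - 1) i (i + 1) (by simp) (by simp)]
        exact ShortComplex.exact_of_isZero_X₂ _
          (by exact isZero_single_obj_X (ComplexShape.up ℤ) (-1) (kernel f) i h1))]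
      rw [HomologicalComplex.exactAt_iff' _ (i - 1) i (i + 1) (by simp) (by simp)]
      exact ShortComplex.exact_of_isZero_X₂ _
        (by exact isZero_X (Abelian.factorThruImage f) h1 h0)

end TwoTermAux

/-- Let `A` be an abelian category and `f : F⁻¹ ⟶ F⁰` a morphism, regarded as a cochain
complex `F•` concentrated in degrees `-1` and `0`.  If `Ext²(coker f, ker f) = 0` (computed
as `Hom_{D(A)}(coker f, (ker f)[2])`), then in the derived category `D(A)` the complex `F•`
is isomorphic to the direct sum of its cohomology objects `(ker f)[1] ⊕ (coker f)`. -/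
theorem two_term_complex_iso_sum_of_cohomology {A : Type u} [Category.{v} A] [Abelian A]
    [HasDerivedCategory.{w} A] {X Y : A} (f : X ⟶ Y)
    (hExt2 : Subsingleton ((DerivedCategory.singleFunctor A 0).obj (cokernel f) ⟶
      ((DerivedCategory.singleFunctor A 0).obj (kernel f))⟦(2 : ℤ)⟧)) :
    Nonempty (DerivedCategory.Q.obj (twoTermComplex f) ≅
      ((DerivedCategory.singleFunctor A 0).obj (kernel f))⟦(1 : ℤ)⟧ ⊞
        (DerivedCategory.singleFunctor A 0).obj (cokernel f)) := by
  have hS := TwoTermAux.ses_shortExact f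
  have hT := DerivedCategory.triangleOfSES_distinguished hS
  let e₁ : DerivedCategory.Q.obj (TwoTermAux.ses f).X₁ ≅
      ((DerivedCategory.singleFunctor A 0).obj (kernel f))⟦(1 : ℤ)⟧ :=
    (asIso (DerivedCategory.Q.map (TwoTermAux.αTwoTerm f))).symm ≪≫
      (by exact (((SingleFunctors.evaluation _ _ (-1)).mapIso
        (DerivedCategory.singleFunctorsPostcompQIso A)).app (kernel f)).symm) ≪≫
      (((DerivedCategory.singleFunctors A).shiftIso 1 (-1) 0 (by norm_num)).app
        (kernel f)).symm
  let e₃ : DerivedCategory.Q.obj (TwoTermAux.ses f).X₃ ≅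
      (DerivedCategory.singleFunctor A 0).obj (cokernel f) :=
    (by exact (((SingleFunctors.evaluation _ _ 0).mapIso
      (DerivedCategory.singleFunctorsPostcompQIso A)).app (cokernel f)).symm)
  have key : e₃.inv ≫ (DerivedCategory.triangleOfSES hS).mor₃ ≫
      (shiftFunctor (DerivedCategory A) (1 : ℤ)).map e₁.hom ≫
      (shiftFunctorAdd' (DerivedCategory A) 1 1 2 (by norm_num)).inv.app
        ((DerivedCategory.singleFunctor A 0).obj (kernel f)) = 0 :=
    @Subsingleton.elim _ hExt2 _ 0
  have h0 : (DerivedCategory.triangleOfSES hS).mor₃ = 0 := by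
    apply (cancel_epi e₃.inv).1
    apply (cancel_mono ((shiftFunctor (DerivedCategory A) (1 : ℤ)).map e₁.hom ≫
      (shiftFunctorAdd' (DerivedCategory A) 1 1 2 (by norm_num)).inv.app
        ((DerivedCategory.singleFunctor A 0).obj (kernel f)))).1
    exact (Category.assoc _ _ _).trans (key.trans (zero_comp.symm.trans (congrArg (· ≫ _) comp_zero.symm)))
  obtain ⟨e, -, -⟩ := Pretriangulated.exists_iso_binaryBiproduct_of_distTriang _ hT h0
  exact ⟨(by exact e) ≪≫ biprod.mapIso e₁ e₃⟩
end

section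
/- (Bergman's gap theorem) Let k be a field and let A be an associative unital k-algebra generated by a finite-dimensional k-subspace V with 1 ∈ V. For n ≥ 1 let F^n A = k + V + V^2 + ⋯ + V^n denote the span of all products of at most n elements of V, and set γ = limsup_n ( ln(dim_k F^n A) / ln(n) ). Then γ never lies in the open interval (1, 2): either γ ≤ 1 or γ ≥ 2. -/
open Filter

universe u

namespace BergmanGap


/-- windows of a sequence -/
def win {α : Type*} (x : ℕ → α) (k : ℕ) (t : ℕ) : Fin k → α := fun i => x (t + i)

/-- the set of windows of length `k` based in positions `≤ ℓ` -/
def Wset {α : Type*} (x : ℕ → α) (ℓ : ℕ) (k : ℕ) : Set (Fin k → α) := win x k '' Set.Iic ℓ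

/-- **Finite Morse–Hedlund**: if a finite stretch of a sequence has at most `n₀` distinct
windows of length `n₀`, it is periodic (period ≤ n₀) away from the two ends. -/
theorem finite_MH {α : Type*} (n₀ : ℕ) (hn₀ : 1 ≤ n₀) (x : ℕ → α) (ℓ : ℕ) (hℓ : n₀ ≤ ℓ)
    (hwin : (Wset x ℓ n₀).ncard ≤ n₀) :
    ∃ a ≤ n₀, ∃ q, 1 ≤ q ∧ q ≤ n₀ ∧ ∀ t, a ≤ t → t + q ≤ ℓ → x (t + q) = x t := by
  classical
  have hWfin : ∀ k, (Wset x ℓ k).Finite := fun k => (Set.finite_Iic ℓ).image _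
  -- restriction of a (k+1)-window to a k-window
  have hres : ∀ k, Wset x ℓ k = (fun g : Fin (k+1) → α => g ∘ Fin.castSucc) '' Wset x ℓ (k+1) := by
    intro k
    rw [Wset, Wset, Set.image_image]
    apply Set.image_congr
    intro t _
    funext i
    simp [win, Fin.coe_castSucc]
  have hmono : ∀ k, (Wset x ℓ k).ncard ≤ (Wset x ℓ (k+1)).ncard := by
    intro k
    rw [hres k]
    exact Set.ncard_image_le (hWfin _)
  -- either level-1 windows are constant, or some level has equal counts
  by_cases hconst : (Wset x ℓ 1).ncard ≤ 1
  · -- constant case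
    refine ⟨0, Nat.zero_le _, 1, le_rfl, hn₀, ?_⟩
    intro t _ htl
    have h1 : win x 1 (t+1) ∈ Wset x ℓ 1 := ⟨t+1, Set.mem_Iic.mpr htl, rfl⟩
    have h2 : win x 1 t ∈ Wset x ℓ 1 := ⟨t, Set.mem_Iic.mpr (by omega), rfl⟩
    have := (Set.ncard_le_one_iff_eq (hWfin 1)).mp hconst  -- Wset x ℓ 1 = ∅ or singleton
    have heq : win x 1 (t+1) = win x 1 t := by
      rcases this with h | ⟨a, h⟩
      · rw [h] at h1; exact absurd h1 (Set.notMem_empty _)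
      · rw [h] at h1 h2; rw [Set.mem_singleton_iff.mp h1, Set.mem_singleton_iff.mp h2]
    have := congrFun heq ⟨0, Nat.zero_lt_one⟩
    simpa [win] using this
  push_neg at hconst
  -- find a level k with equal counts
  have hex : ∃ k, 1 ≤ k ∧ k + 1 ≤ n₀ ∧ (Wset x ℓ (k+1)).ncard ≤ (Wset x ℓ k).ncard := by
    by_contra h
    push_neg at h
    have hstep : ∀ k, 1 ≤ k → k ≤ n₀ → k + 1 ≤ (Wset x ℓ k).ncard := by
      intro k
      induction k with
      | zero => omega
      | succ j IH =>
        intro _ hj1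
        rcases Nat.eq_or_lt_of_le (show 1 ≤ j + 1 from by omega) with h1 | h1
        · -- j = 0
          have : j = 0 := by omega
          subst this; exact hconst
        · have hj : 1 ≤ j := by omega
          have := IH hj (by omega)
          have hlt := h j hj (by omega)
          omega
    have := hstep n₀ hn₀ le_rfl
    omega
  obtain ⟨k, hk1, hkn, hkcard⟩ := hex
  -- injectivity of restriction on Wset x ℓ (k+1)
  have hinj : Set.InjOn (fun g : Fin (k+1) → α => g ∘ Fin.castSucc) (Wset x ℓ (k+1)) := by
    apply Set.injOn_of_ncard_image_eq _ (hWfin _)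
    rw [← hres k]
    exact le_antisymm (hmono k) hkcard
  -- determinism
  have hdet : ∀ t t', t ≤ ℓ → t' ≤ ℓ → win x k t = win x k t' → x (t + k) = x (t' + k) := by
    intro t t' ht ht' hw
    have h1 : win x (k+1) t ∈ Wset x ℓ (k+1) := ⟨t, Set.mem_Iic.mpr ht, rfl⟩
    have h2 : win x (k+1) t' ∈ Wset x ℓ (k+1) := ⟨t', Set.mem_Iic.mpr ht', rfl⟩
    have hr : (fun g : Fin (k+1) → α => g ∘ Fin.castSucc) (win x (k+1) t)
        = (fun g : Fin (k+1) → α => g ∘ Fin.castSucc) (win x (k+1) t') := by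
      funext i
      have := congrFun hw i
      simpa [win, Fin.coe_castSucc] using this
    have := hinj h1 h2 hr
    have := congrFun this (Fin.last k)
    simpa [win, Fin.val_last] using this
  -- pigeonhole among the first n₀+1 full windows
  have hpig : ∃ i j, i < j ∧ j ≤ n₀ ∧ win x n₀ i = win x n₀ j := by
    have hmaps : ∀ t ∈ Finset.Iic n₀, win x n₀ t ∈ (hWfin n₀).toFinset := by
      intro t ht
      simp only [Set.Finite.mem_toFinset]
      exact ⟨t, by simpa using (Finset.mem_Iic.mp ht).trans hℓ, rfl⟩
    have hcard : (hWfin n₀).toFinset.card < (Finset.Iic n₀).card := by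
      rw [Nat.card_Iic]
      have : (hWfin n₀).toFinset.card = (Wset x ℓ n₀).ncard := (Set.ncard_eq_toFinset_card _ (hWfin n₀)).symm
      omega
    obtain ⟨i, hi, j, hj, hij, heq⟩ :=
      Finset.exists_ne_map_eq_of_card_lt_of_maps_to hcard hmaps
    rcases lt_or_gt_of_ne hij with h | h
    · exact ⟨i, j, h, Finset.mem_Iic.mp hj, heq⟩
    · exact ⟨j, i, h, Finset.mem_Iic.mp hi, heq.symm⟩
  obtain ⟨a, j, haj, hjn, hwineq⟩ := hpig
  set q := j - a with hq
  have hq1 : 1 ≤ q := by omega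
  have hqn : q ≤ n₀ := by omega
  have hbase : win x k a = win x k (a + q) := by
    funext i
    have := congrFun hwineq (⟨(i : ℕ), lt_of_lt_of_le i.isLt (by omega)⟩ : Fin n₀)
    simpa [win, show a + q = j from by omega] using this
  -- propagate
  have hprop : ∀ t, a ≤ t → t + q ≤ ℓ → win x k t = win x k (t + q) := by
    intro t hat
    induction t, hat using Nat.le_induction with
    | base => intro _; exact hbase
    | succ t hat IH =>
      intro hql
      have ht : t + q ≤ ℓ := by omega
      have hwk := IH ht
      funext i
      rcases Nat.lt_or_ge ((i : ℕ) + 1) k with hik | hik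
      · have := congrFun hwk (⟨(i : ℕ) + 1, hik⟩ : Fin k)
        simp only [win] at this ⊢
        convert this using 2 <;> omega
      · have hik' : (i : ℕ) = k - 1 := by omega
        have hdet' := hdet t (t + q) (by omega) (by omega) hwk
        simp only [win]
        have h1 : t + 1 + (i : ℕ) = t + k := by omega
        have h2 : t + 1 + q + (i : ℕ) = t + q + k := by omega
        rw [h1, h2, hdet']
  refine ⟨a, by omega, q, hq1, hqn, ?_⟩
  intro t hat htl
  have := congrFun (hprop t hat htl) (⟨0, by omega⟩ : Fin k)
  simpa [win] using this.symm

/-- helper: windows of a list are factors -/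
theorem window_decomp {α : Type*} (w : List α) (t n₀ : ℕ) :
    w = w.take t ++ (w.drop t).take n₀ ++ w.drop (t + n₀) := by
  rw [List.append_assoc]
  conv_lhs => rw [← List.take_append_drop t w]
  congr 1
  conv_lhs => rw [← List.take_append_drop n₀ (w.drop t)]
  rw [List.drop_drop]

theorem getD_take {α : Type*} [Inhabited α] (l : List α) (n i : ℕ) (hi : i < n)
    (hl : i < l.length) : (l.take n).getD i default = l.getD i default := by
  have h1 : i < (l.take n).length := by simp [List.length_take]; omega
  rw [List.getD_eq_getElem _ _ h1, List.getD_eq_getElem _ _ hl, List.getElem_take]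

theorem getD_drop {α : Type*} [Inhabited α] (l : List α) (j i : ℕ) (h : j + i < l.length) :
    (l.drop j).getD i default = l.getD (j + i) default := by
  have h1 : i < (l.drop j).length := by simp [List.length_drop]; omega
  rw [List.getD_eq_getElem _ _ h1, List.getD_eq_getElem _ _ h, List.getElem_drop]

theorem getD_window {α : Type*} [Inhabited α] (w : List α) (t n₀ : ℕ) (i : ℕ) (hi : i < n₀)
    (ht : t + n₀ ≤ w.length) :
    ((w.drop t).take n₀).getD i default = w.getD (t + i) default := by
  rw [getD_take _ _ _ hi (by simp [List.length_drop]; omega), getD_drop _ _ _ (by omega)]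

/-- A factor-closed set of words whose number of words of some length `n₀ ≥ 1` is at most `n₀`
has boundedly many words of every length. -/
theorem factorial_bounded {α : Type*} [Fintype α] [Inhabited α]
    (L : Set (List α)) (hL : ∀ p v s : List α, p ++ v ++ s ∈ L → v ∈ L)
    (n₀ : ℕ) (hn₀ : 1 ≤ n₀) (hcard : {w ∈ L | w.length = n₀}.ncard ≤ n₀) :
    ∃ C : ℕ, ∀ m : ℕ, {w ∈ L | w.length = m}.ncard ≤ C := by
  classical
  have hT2 : {l : List α | l.length ≤ 2 * n₀}.Finite := List.finite_length_le α (2*n₀)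
  have hbigT : ({l : List α | l.length ≤ 2 * n₀} ×ˢ
      ({l : List α | l.length ≤ 2 * n₀} ×ˢ ((Set.Iic n₀) ×ˢ (Set.Iic n₀)))).Finite :=
    hT2.prod (hT2.prod ((Set.finite_Iic _).prod (Set.finite_Iic _)))
  refine ⟨({l : List α | l.length ≤ 2 * n₀} ×ˢ
      ({l : List α | l.length ≤ 2 * n₀} ×ˢ ((Set.Iic n₀) ×ˢ (Set.Iic n₀)))).ncard
      + {l : List α | l.length ≤ 2 * n₀}.ncard, ?_⟩
  intro m
  have hfin : {w ∈ L | w.length = m}.Finite :=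
    (List.finite_length_eq α m).subset (fun w hw => hw.2)
  by_cases hm : m ≤ 2 * n₀
  · have hsub : {w ∈ L | w.length = m} ⊆ {l : List α | l.length ≤ 2 * n₀} :=
      fun w hw => le_trans (le_of_eq hw.2) hm
    have := Set.ncard_le_ncard hsub hT2
    omega
  push_neg at hm
  -- every word of length m is "middle-periodic"
  have key : ∀ w, w ∈ L → w.length = m → ∃ a ≤ n₀, ∃ q, 1 ≤ q ∧ q ≤ n₀ ∧
      ∀ t, a ≤ t → t + q ≤ m - n₀ → w.getD (t + q) default = w.getD t default := by
    intro w hwL hwm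
    have hws : Wset (fun t => w.getD t default) (m - n₀) n₀ ⊆
        (fun l : List α => fun i : Fin n₀ => l.getD (i : ℕ) default) '' {w ∈ L | w.length = n₀} := by
      rintro _ ⟨t, htm, rfl⟩
      have htm' : t ≤ m - n₀ := htm
      have ht : t + n₀ ≤ w.length := by omega
      have hmem : (w.drop t).take n₀ ∈ L := hL (w.take t) _ (w.drop (t + n₀))
        (by rw [← window_decomp w t n₀]; exact hwL)
      have hlen : ((w.drop t).take n₀).length = n₀ := by
        simp [List.length_take, List.length_drop]; omega
      refine ⟨(w.drop t).take n₀, ⟨hmem, hlen⟩, ?_⟩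
      funext i
      exact getD_window w t n₀ i i.isLt ht
    have hSfin : {w ∈ L | w.length = n₀}.Finite :=
      (List.finite_length_eq α n₀).subset (fun w hw => hw.2)
    have hwin : (Wset (fun t => w.getD t default) (m - n₀) n₀).ncard ≤ n₀ :=
      le_trans (Set.ncard_le_ncard hws (hSfin.image _))
        (le_trans (Set.ncard_image_le hSfin) hcard)
    exact finite_MH n₀ hn₀ _ (m - n₀) (by omega) hwin
  have hchoice : ∀ w : List α, ∃ p : ℕ × ℕ, w ∈ L → w.length = m →
      (p.1 ≤ n₀ ∧ 1 ≤ p.2 ∧ p.2 ≤ n₀ ∧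
        ∀ t, p.1 ≤ t → t + p.2 ≤ m - n₀ → w.getD (t + p.2) default = w.getD t default) := by
    intro w
    by_cases hw : w ∈ L ∧ w.length = m
    · obtain ⟨a, ha, q, hq1, hq2, hper⟩ := key w hw.1 hw.2
      exact ⟨(a, q), fun _ _ => ⟨ha, hq1, hq2, hper⟩⟩
    · refine ⟨(0, 1), fun h1 h2 => absurd ⟨h1, h2⟩ hw⟩
  choose c hc using hchoice
  have hinjcard := Set.ncard_le_ncard_of_injOn
    (fun w : List α => (w.take ((c w).1 + (c w).2), (w.drop (m - n₀ + 1), ((c w).1, (c w).2))))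
    (s := {w ∈ L | w.length = m}) ?maps ?inj hbigT
  · omega
  case maps =>
    rintro w ⟨hwL, hwm⟩
    obtain ⟨ha, hq1, hq2, hper⟩ := hc w hwL hwm
    refine ⟨?_, ?_, ?_, ?_⟩
    · simp only [Set.mem_setOf_eq, List.length_take]
      omega
    · simp only [Set.mem_setOf_eq, List.length_drop]
      omega
    · exact Set.mem_Iic.mpr ha
    · exact Set.mem_Iic.mpr hq2
  case inj =>
    rintro w ⟨hwL, hwm⟩ w' ⟨hwL', hwm'⟩ heq
    simp only [Prod.mk.injEq] at heq
    obtain ⟨htake, hdrop, hca, hcq⟩ := heq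
    obtain ⟨ha, hq1, hq2, hper⟩ := hc w hwL hwm
    obtain ⟨ha', hq1', hq2', hper'⟩ := hc w' hwL' hwm'
    rw [← hca, ← hcq] at hper' htake
    set a := (c w).1 with hadef
    set q := (c w).2 with hqdef
    have haux : ∀ t, t < m → w.getD t default = w'.getD t default := by
      intro t
      induction t using Nat.strong_induction_on with
      | _ t IH =>
        intro htm
        rcases lt_or_ge t (a + q) with h1 | h1
        · have e1 : (w.take (a + q)).getD t default = (w'.take (a + q)).getD t default := by
            rw [htake]
          rwa [getD_take _ _ _ h1 (by omega), getD_take _ _ _ h1 (by omega)] at e1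
        · rcases le_or_gt t (m - n₀) with h2 | h2
          · have hw1 := hper (t - q) (by omega) (by omega)
            have hw2 := hper' (t - q) (by omega) (by omega)
            rw [show t - q + q = t from by omega] at hw1 hw2
            rw [hw1, hw2]
            exact IH (t - q) (by omega) (by omega)
          · have e1 : (w.drop (m - n₀ + 1)).getD (t - (m - n₀ + 1)) default
                = (w'.drop (m - n₀ + 1)).getD (t - (m - n₀ + 1)) default := by
              rw [hdrop]
            rw [getD_drop _ _ _ (by omega), getD_drop _ _ _ (by omega),
              show m - n₀ + 1 + (t - (m - n₀ + 1)) = t from by omega] at e1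
            exact e1
    apply List.ext_getElem (by omega)
    intro i h1 h2
    have := haux i (by omega)
    rwa [List.getD_eq_getElem _ _ h1, List.getD_eq_getElem _ _ h2] at this



def geom (r : ℕ) : ℕ → ℕ
  | 0 => 0
  | L + 1 => r ^ L + geom r L

def enc (r : ℕ) : List (Fin r) → ℕ
  | [] => 0
  | a :: t => ((a : ℕ) + 1) * r ^ t.length + enc r t

theorem geom_le_geom {r : ℕ} {L L' : ℕ} (h : L ≤ L') : geom r L ≤ geom r L' := by
  induction L' with
  | zero => simpa [Nat.le_zero.mp h] using le_rfl
  | succ M IH =>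
    rcases Nat.eq_or_lt_of_le h with h1 | h1
    · rw [h1]
    · exact le_trans (IH (by omega)) (by simp [geom])

theorem geom_le_enc {r : ℕ} (w : List (Fin r)) : geom r w.length ≤ enc r w := by
  induction w with
  | nil => simp [geom, enc]
  | cons a t IH =>
    have h1 : 1 * r ^ t.length ≤ ((a : ℕ) + 1) * r ^ t.length :=
      Nat.mul_le_mul_right _ (by omega)
    simp only [enc, List.length_cons, geom]
    omega

theorem enc_lt_geom {r : ℕ} (w : List (Fin r)) : enc r w < geom r (w.length + 1) := by
  induction w with
  | nil => simp [geom, enc]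
  | cons a t IH =>
    have h1 : ((a : ℕ) + 1) * r ^ t.length ≤ r * r ^ t.length :=
      Nat.mul_le_mul_right _ (by have := a.isLt; omega)
    simp only [enc, List.length_cons, geom]
    have h2 : r * r ^ t.length = r ^ (t.length + 1) := by rw [pow_succ]; ring
    have h3 : geom r (t.length + 1) = r ^ t.length + geom r t.length := rfl
    omega

theorem enc_lt_of_length_lt {r : ℕ} (hr : 1 ≤ r) {u v : List (Fin r)}
    (h : u.length < v.length) : enc r u < enc r v :=
  lt_of_lt_of_le (enc_lt_geom u) (le_trans (geom_le_geom h) (geom_le_enc v))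

theorem length_le_of_enc_le {r : ℕ} (hr : 1 ≤ r) {u v : List (Fin r)}
    (h : enc r u ≤ enc r v) : u.length ≤ v.length := by
  by_contra hc
  exact absurd (enc_lt_of_length_lt hr (show v.length < u.length by omega)) (by omega)

theorem enc_append {r : ℕ} (u v : List (Fin r)) :
    enc r (u ++ v) = enc r u * r ^ v.length + enc r v := by
  induction u with
  | nil => simp [enc]
  | cons a t IH =>
    simp only [List.cons_append, enc, List.append_eq, List.length_append, IH,
      List.length_cons]
    rw [pow_add]
    ring

theorem enc_congr {r : ℕ} (hr : 1 ≤ r) {u v : List (Fin r)} (h : enc r u < enc r v)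
    (p s : List (Fin r)) : enc r (p ++ u ++ s) < enc r (p ++ v ++ s) := by
  rcases lt_trichotomy u.length v.length with h1 | h1 | h1
  · apply enc_lt_of_length_lt hr
    simp only [List.length_append]
    omega
  · rw [enc_append, enc_append, enc_append, enc_append, h1, Nat.add_mul, Nat.add_mul]
    have h2 : 0 < r ^ s.length := Nat.pow_pos (by omega)
    have h3 : enc r u * r ^ s.length < enc r v * r ^ s.length :=
      (Nat.mul_lt_mul_right h2).mpr h
    omega
  · exact absurd h (by exact not_lt.mpr (le_of_lt (enc_lt_of_length_lt hr h1)))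

theorem enc_inj {r : ℕ} (hr : 1 ≤ r) : ∀ {u v : List (Fin r)},
    u.length = v.length → enc r u = enc r v → u = v := by
  intro u
  induction u with
  | nil =>
    intro v hlen _
    exact (List.length_eq_zero_iff.mp hlen.symm).symm
  | cons a t IH =>
    intro v hlen henc
    cases v with
    | nil => simp at hlen
    | cons b t' =>
      have hL : t.length = t'.length := by simpa using hlen
      simp only [enc, hL] at henc
      have hb1 := geom_le_enc t
      have hb2 := enc_lt_geom t
      have hb3 := geom_le_enc t'
      have hb4 := enc_lt_geom t'
      rw [hL] at hb1 hb2
      have hgeom : geom r (t'.length + 1) = r ^ t'.length + geom r t'.length := rfl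
      have hab : (a : ℕ) = (b : ℕ) := by
        by_contra hab
        rcases Nat.lt_or_ge (a : ℕ) (b : ℕ) with h1 | h1
        · have h2 : ((a : ℕ) + 2) * r ^ t'.length ≤ ((b : ℕ) + 1) * r ^ t'.length :=
            Nat.mul_le_mul_right _ (by omega)
          have h3 : ((a : ℕ) + 2) * r ^ t'.length
              = ((a : ℕ) + 1) * r ^ t'.length + r ^ t'.length := by ring
          omega
        · have h1' : (b : ℕ) < (a : ℕ) := by omega
          have h2 : ((b : ℕ) + 2) * r ^ t'.length ≤ ((a : ℕ) + 1) * r ^ t'.length :=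
            Nat.mul_le_mul_right _ (by omega)
          have h3 : ((b : ℕ) + 2) * r ^ t'.length
              = ((b : ℕ) + 1) * r ^ t'.length + r ^ t'.length := by ring
          omega
      have ha : a = b := Fin.ext hab
      subst ha
      have ht : enc r t = enc r t' := by omega
      rw [IH hL ht]

section Alg

variable {k : Type*} [Field k] {A : Type*} [Ring A] [Algebra k A]
variable {r : ℕ}

/-- product of the letters of a word -/
def phi (x : Fin r → A) (w : List (Fin r)) : A := (w.map x).prod

theorem phi_nil (x : Fin r → A) : phi x [] = 1 := rfl

theorem phi_append (x : Fin r → A) (u v : List (Fin r)) :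
    phi x (u ++ v) = phi x u * phi x v := by
  simp [phi]

/-- reduced words: words whose image is not in the span of the images of smaller words -/
def Red (k : Type*) [Field k] {A : Type*} [Ring A] [Algebra k A] (x : Fin r → A) :
    Set (List (Fin r)) :=
  {w | phi x w ∉ Submodule.span k (phi x '' {v | enc r v < enc r w})}

theorem red_factor (hr : 1 ≤ r) (x : Fin r → A) :
    ∀ p v s : List (Fin r), p ++ v ++ s ∈ Red k x → v ∈ Red k x := by
  intro p v s
  rw [← not_imp_not]
  intro hv
  simp only [Red, Set.mem_setOf_eq, not_not] at hv ⊢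
  have hmul : phi x (p ++ v ++ s)
      = ((LinearMap.mulRight k (phi x s)).comp (LinearMap.mulLeft k (phi x p))) (phi x v) := by
    simp [phi_append, LinearMap.mulRight_apply, LinearMap.mulLeft_apply, mul_assoc]
  rw [hmul]
  have h1 := Submodule.apply_mem_span_image_of_mem_span
    ((LinearMap.mulRight k (phi x s)).comp (LinearMap.mulLeft k (phi x p))) hv
  refine Submodule.span_mono ?_ h1
  rintro _ ⟨_, ⟨u, hu, rfl⟩, rfl⟩
  refine ⟨p ++ u ++ s, enc_congr hr hu p s, ?_⟩
  simp [phi_append, LinearMap.mulRight_apply, LinearMap.mulLeft_apply, mul_assoc]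

theorem mem_span_red (hr : 1 ≤ r) (x : Fin r → A) (w : List (Fin r)) :
    phi x w ∈ Submodule.span k (phi x '' {v | v ∈ Red k x ∧ v.length ≤ w.length}) := by
  suffices H : ∀ (n : ℕ) (w : List (Fin r)), enc r w < n →
      phi x w ∈ Submodule.span k (phi x '' {v | v ∈ Red k x ∧ v.length ≤ w.length}) from
    H (enc r w + 1) w (Nat.lt_succ_self _)
  intro n
  induction n with
  | zero => intro w hw; omega
  | succ n IH =>
    intro w hw
    by_cases hred : w ∈ Red k x
    · exact Submodule.subset_span ⟨w, ⟨hred, le_rfl⟩, rfl⟩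
    · simp only [Red, Set.mem_setOf_eq, not_not] at hred
      refine Submodule.span_le.mpr ?_ hred
      rintro _ ⟨u, hu, rfl⟩
      simp only [Set.mem_setOf_eq] at hu
      have h1 := IH u (by omega)
      have h2 : u.length ≤ w.length := length_le_of_enc_le hr (le_of_lt hu)
      refine SetLike.le_def.mp (Submodule.span_mono ?_) h1
      exact Set.image_mono (fun v hv => ⟨hv.1, le_trans hv.2 h2⟩)

variable (V : Submodule k A)

theorem pow_span (x : Fin r → A) (hx : Submodule.span k (Set.range x) = V) (i : ℕ) :
    V ^ i = Submodule.span k (phi x '' {w | w.length = i}) := by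
  induction i with
  | zero =>
    have : {w : List (Fin r) | w.length = 0} = {[]} := by
      ext w; simp [List.length_eq_zero_iff]
    rw [pow_zero, this, Set.image_singleton, phi_nil, Submodule.one_eq_span]
  | succ i IH =>
    rw [pow_succ, IH, ← hx, Submodule.span_mul_span]
    congr 1
    ext z
    constructor
    · rintro ⟨a, ⟨w, hw, rfl⟩, b, ⟨j, rfl⟩, rfl⟩
      have hw' : w.length = i := hw
      refine ⟨w ++ [j], by simp [Set.mem_setOf_eq, hw'], ?_⟩
      simp [phi_append, phi]
    · rintro ⟨w, hw, rfl⟩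
      simp only [Set.mem_setOf_eq] at hw
      have hne : w ≠ [] := by intro h; rw [h] at hw; simp at hw
      refine ⟨phi x w.dropLast, ⟨w.dropLast,
          by simp only [Set.mem_setOf_eq, List.length_dropLast, hw]; omega, rfl⟩,
        x (w.getLast hne), ⟨w.getLast hne, rfl⟩, ?_⟩
      show phi x w.dropLast * x (w.getLast hne) = phi x w
      conv_rhs => rw [← List.dropLast_append_getLast hne]
      rw [phi_append]
      simp [phi]

theorem Fn_eq (x : Fin r → A) (hx : Submodule.span k (Set.range x) = V) (n : ℕ) :
    ((1 : Submodule k A) ⊔ ⨆ i ∈ Finset.Icc 1 n, V ^ i)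
      = Submodule.span k (phi x '' {w | w.length ≤ n}) := by
  have hsets : {w : List (Fin r) | w.length ≤ n} = ⋃ i : Fin (n+1), {w | w.length = (i : ℕ)} := by
    ext w
    simp only [Set.mem_setOf_eq, Set.mem_iUnion]
    constructor
    · intro h; exact ⟨⟨w.length, by omega⟩, rfl⟩
    · rintro ⟨i, hi⟩; omega
  rw [hsets, Set.image_iUnion, Submodule.span_iUnion]
  apply le_antisymm
  · apply sup_le
    · rw [← pow_zero V, pow_span V x hx 0]
      exact le_iSup_of_le (⟨0, by omega⟩ : Fin (n+1)) le_rfl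
    · apply iSup₂_le
      intro i hi
      simp only [Finset.mem_Icc] at hi
      rw [pow_span V x hx i]
      exact le_iSup_of_le (⟨i, by omega⟩ : Fin (n+1)) le_rfl
  · apply iSup_le
    intro i
    rw [← pow_span V x hx]
    rcases Nat.eq_or_lt_of_le (Nat.zero_le (i : ℕ)) with h0 | h0
    · rw [← h0, pow_zero]
      exact le_sup_left
    · exact le_sup_of_le_right (le_iSup₂_of_le (i : ℕ) (by simp [Finset.mem_Icc]; omega) le_rfl)

theorem finrank_le_ncard (hr : 1 ≤ r) (x : Fin r → A) (n : ℕ) :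
    Module.finrank k ↥(Submodule.span k (phi x '' {w | w.length ≤ n}))
      ≤ ((Red k x) ∩ {w | w.length ≤ n}).ncard := by
  classical
  have hfin : ((Red k x) ∩ {w | w.length ≤ n}).Finite :=
    (List.finite_length_le (Fin r) n).subset (fun w hw => hw.2)
  have h1 : Submodule.span k (phi x '' {w | w.length ≤ n})
      ≤ Submodule.span k (phi x '' ((Red k x) ∩ {w | w.length ≤ n})) := by
    rw [Submodule.span_le]
    rintro _ ⟨w, hw, rfl⟩
    have hmem := mem_span_red (k := k) hr x w
    refine SetLike.le_def.mp (Submodule.span_mono (Set.image_mono ?_)) hmem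
    exact fun v hv => ⟨hv.1, le_trans hv.2 hw⟩
  haveI := FiniteDimensional.span_of_finite k (hfin.image (phi x))
  have h2 := Submodule.finrank_mono h1
  haveI := (hfin.image (phi x)).fintype
  have h3 := finrank_span_le_card (R := k) (phi x '' ((Red k x) ∩ {w | w.length ≤ n}))
  have h4 : (phi x '' (Red k x ∩ {w | w.length ≤ n})).toFinset.card
      = (phi x '' (Red k x ∩ {w | w.length ≤ n})).ncard :=
    (Set.ncard_eq_toFinset_card' _).symm
  have h5 := Set.ncard_image_le (s := Red k x ∩ {w | w.length ≤ n}) (f := phi x) hfin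
  omega

theorem card_le_finrank (hr : 1 ≤ r) (x : Fin r → A) :
    ∀ s : Finset (List (Fin r)), (↑s ⊆ Red k x) →
      s.card ≤ Module.finrank k ↥(Submodule.span k (phi x '' ↑s)) := by
  classical
  intro s
  induction s using Finset.strongInductionOn with
  | _ s IH =>
    intro hs
    rcases Finset.eq_empty_or_nonempty s with rfl | hne
    · simp
    obtain ⟨w, hws, hwmax⟩ := Finset.exists_max_image s (enc r) hne
    have hsub : (↑(s.erase w) : Set (List (Fin r))) ⊆ ↑s :=
      fun v hv => Finset.mem_of_mem_erase hv
    have IH' := IH (s.erase w) (Finset.erase_ssubset hws) (subset_trans hsub hs)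
    haveI := FiniteDimensional.span_of_finite k (s.finite_toSet.image (phi x))
    have hlt : Submodule.span k (phi x '' ↑(s.erase w))
        < Submodule.span k (phi x '' ↑s) := by
      refine lt_of_le_of_ne (Submodule.span_mono (Set.image_mono hsub)) ?_
      intro heq
      have hw_in : phi x w ∈ Submodule.span k (phi x '' ↑s) :=
        Submodule.subset_span ⟨w, by simpa using hws, rfl⟩
      rw [← heq] at hw_in
      have hs' : phi x '' ↑(s.erase w) ⊆ phi x '' {v | enc r v < enc r w} := by
        apply Set.image_mono
        intro v hv
        have hvs : v ∈ s := Finset.mem_of_mem_erase hv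
        have hvne : v ≠ w := Finset.ne_of_mem_erase hv
        have hle := hwmax v hvs
        rcases Nat.eq_or_lt_of_le hle with h1 | h1
        · have hlen : v.length = w.length :=
            le_antisymm (length_le_of_enc_le hr h1.le) (length_le_of_enc_le hr h1.ge)
          exact absurd (enc_inj hr hlen h1) hvne
        · exact h1
      have hfinal := SetLike.le_def.mp (Submodule.span_mono hs') hw_in
      exact (hs (Finset.mem_coe.mpr hws)) hfinal
    have hrank := Submodule.finrank_lt_finrank_of_lt hlt
    have hcard : (s.erase w).card = s.card - 1 := Finset.card_erase_of_mem hws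
    have hpos : 1 ≤ s.card := Finset.card_pos.mpr hne
    omega

end Alg


-- counting lemmas
theorem ncard_le_linear {α : Type*} [Fintype α] (L : Set (List α)) (C : ℕ)
    (hC : ∀ m, {w ∈ L | w.length = m}.ncard ≤ C) (n : ℕ) :
    (L ∩ {w | w.length ≤ n}).ncard ≤ (C + 1) + (C + 1) * n := by
  induction n with
  | zero =>
    have h1 : L ∩ {w | w.length ≤ 0} ⊆ {([] : List α)} := by
      intro w hw
      simpa [List.length_eq_zero_iff] using Nat.le_zero.mp hw.2
    have := Set.ncard_le_ncard h1 (Set.finite_singleton _)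
    simp only [Set.ncard_singleton] at this
    omega
  | succ n IH =>
    have hsplit : L ∩ {w | w.length ≤ n + 1}
        = (L ∩ {w | w.length ≤ n}) ∪ {w ∈ L | w.length = n + 1} := by
      ext w
      simp only [Set.mem_inter_iff, Set.mem_union, Set.mem_setOf_eq]
      constructor
      · rintro ⟨h1, h2⟩
        rcases Nat.lt_or_ge w.length (n+1) with h3 | h3
        · exact Or.inl ⟨h1, by omega⟩
        · exact Or.inr ⟨h1, by omega⟩
      · rintro (⟨h1, h2⟩ | ⟨h1, h2⟩) <;> exact ⟨h1, by omega⟩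
    rw [hsplit]
    have h2 := Set.ncard_union_le (L ∩ {w | w.length ≤ n}) {w ∈ L | w.length = n + 1}
    have h3 := hC (n + 1)
    have h4 : (C + 1) + (C + 1) * (n + 1) = ((C+1) + (C+1)*n) + (C+1) := by ring
    omega

theorem quad_le_ncard {α : Type*} [Fintype α] (L : Set (List α))
    (hL : ∀ N : ℕ, 1 ≤ N → N < {w ∈ L | w.length = N}.ncard) (n : ℕ) :
    n * n ≤ 2 * (L ∩ {w | w.length ≤ n}).ncard := by
  induction n with
  | zero => simp
  | succ n IH =>
    have hsplit : L ∩ {w | w.length ≤ n + 1}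
        = (L ∩ {w | w.length ≤ n}) ∪ {w ∈ L | w.length = n + 1} := by
      ext w
      simp only [Set.mem_inter_iff, Set.mem_union, Set.mem_setOf_eq]
      constructor
      · rintro ⟨h1, h2⟩
        rcases Nat.lt_or_ge w.length (n+1) with h3 | h3
        · exact Or.inl ⟨h1, by omega⟩
        · exact Or.inr ⟨h1, by omega⟩
      · rintro (⟨h1, h2⟩ | ⟨h1, h2⟩) <;> exact ⟨h1, by omega⟩
    have hfin1 : (L ∩ {w | w.length ≤ n}).Finite :=
      (List.finite_length_le α n).subset (fun w hw => hw.2)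
    have hfin2 : {w ∈ L | w.length = n + 1}.Finite :=
      (List.finite_length_eq α (n+1)).subset (fun w hw => hw.2)
    have hdisj : Disjoint (L ∩ {w | w.length ≤ n}) {w ∈ L | w.length = n + 1} := by
      rw [Set.disjoint_left]
      rintro w ⟨h1, h2⟩ ⟨h3, h4⟩
      simp only [Set.mem_setOf_eq] at h2
      omega
    have hunion := Set.ncard_union_eq hdisj hfin1 hfin2
    rw [hsplit, hunion]
    have h5 := hL (n+1) (by omega)
    nlinarith [IH, h5]

-- analysis lemmas
theorem limsup_le_one_of_linear (d : ℕ → ℕ) (C : ℕ)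
    (h : ∀ n : ℕ, d n ≤ (C + 1) + (C + 1) * n) :
    limsup (fun n : ℕ => ((Real.log (d n) / Real.log n : ℝ) : EReal)) atTop ≤ 1 := by
  obtain ⟨c, hc1, hcd⟩ : ∃ c : ℝ, 1 ≤ c ∧ ∀ n : ℕ, (d n : ℝ) ≤ c + c * n := by
    refine ⟨(C : ℝ) + 1, by have := Nat.cast_nonneg (α := ℝ) C; linarith, fun n => ?_⟩
    have h2 : (d n : ℝ) ≤ (((C + 1) + (C + 1) * n : ℕ) : ℝ) := Nat.cast_le.mpr (h n)
    push_cast at h2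
    linarith
  have hgle : (fun n : ℕ => ((Real.log (d n) / Real.log n : ℝ) : EReal))
      ≤ᶠ[atTop] (fun n : ℕ => ((Real.log (c + c * n) / Real.log n : ℝ) : EReal)) := by
    filter_upwards [eventually_ge_atTop 2] with n hn
    simp only [EReal.coe_le_coe_iff]
    have hn1 : (1 : ℝ) < (n : ℝ) := by exact_mod_cast Nat.lt_of_lt_of_le Nat.one_lt_two hn
    have hlogn : 0 < Real.log n := Real.log_pos hn1
    have harg : (1 : ℝ) ≤ c + c * n := by nlinarith
    have hnum : Real.log (d n) ≤ Real.log (c + c * n) := by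
      rcases Nat.eq_zero_or_pos (d n) with h0 | h0
      · rw [h0]
        simp only [Nat.cast_zero, Real.log_zero]
        exact Real.log_nonneg harg
      · exact Real.log_le_log (by exact_mod_cast h0) (hcd n)
    exact (div_le_div_iff_of_pos_right hlogn).mpr hnum
  have hgt : Tendsto (fun n : ℕ => ((Real.log (c + c * n) / Real.log n : ℝ) : EReal))
      atTop (nhds (1 : EReal)) := by
    have key : Tendsto (fun n : ℕ => Real.log (c + c * n) / Real.log n)
        atTop (nhds (1 : ℝ)) := by
      have h1 : ∀ᶠ n : ℕ in atTop,
          Real.log (c / n + c) / Real.log n + 1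
            = Real.log (c + c * n) / Real.log n := by
        filter_upwards [eventually_ge_atTop 2] with n hn
        have h2n : (2 : ℝ) ≤ (n : ℝ) := by exact_mod_cast hn
        have hn0 : (0 : ℝ) < n := by linarith
        have hlogn : Real.log n ≠ 0 := ne_of_gt (Real.log_pos (by linarith))
        have hu : (0 : ℝ) < c / n + c := by positivity
        have harg : c + c * n = (c / n + c) * n := by
          rw [add_mul, div_mul_cancel₀ _ (ne_of_gt hn0)]
          try ring
        rw [harg, Real.log_mul (ne_of_gt hu) (ne_of_gt hn0)]
        field_simp
      have h3 : Tendsto (fun n : ℕ => c / n + c) atTop (nhds (0 + c)) :=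
        (tendsto_const_div_atTop_nhds_zero_nat c).add tendsto_const_nhds
      rw [zero_add] at h3
      have h4 : Tendsto (fun n : ℕ => Real.log (c / n + c)) atTop (nhds (Real.log c)) :=
        ((Real.continuousAt_log (by linarith)).tendsto).comp h3
      have h5 : Tendsto (fun n : ℕ => Real.log (c / n + c) / Real.log n) atTop (nhds 0) :=
        Tendsto.div_atTop h4 (Real.tendsto_log_atTop.comp tendsto_natCast_atTop_atTop)
      have h6 := h5.add (tendsto_const_nhds (x := (1:ℝ)))
      rw [zero_add] at h6
      exact h6.congr' h1
    have h7 := EReal.tendsto_coe.mpr key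
    have h8 : ((1 : ℝ) : EReal) = (1 : EReal) := by norm_cast
    rwa [h8] at h7
  calc limsup (fun n : ℕ => ((Real.log (d n) / Real.log n : ℝ) : EReal)) atTop
      ≤ limsup (fun n : ℕ => ((Real.log (c + c * n) / Real.log n : ℝ) : EReal)) atTop :=
        limsup_le_limsup hgle
    _ = 1 := hgt.limsup_eq

theorem two_le_limsup_of_quadratic (d : ℕ → ℕ) (h : ∀ n : ℕ, n * n ≤ 2 * d n) :
    2 ≤ limsup (fun n : ℕ => ((Real.log (d n) / Real.log n : ℝ) : EReal)) atTop := by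
  have hgle : (fun n : ℕ => ((2 - Real.log 2 / Real.log n : ℝ) : EReal))
      ≤ᶠ[atTop] (fun n : ℕ => ((Real.log (d n) / Real.log n : ℝ) : EReal)) := by
    filter_upwards [eventually_ge_atTop 2] with n hn
    simp only [EReal.coe_le_coe_iff]
    have h2n : (2 : ℝ) ≤ (n : ℝ) := by exact_mod_cast hn
    have hlogn : 0 < Real.log n := Real.log_pos (by linarith)
    have hdn : ((n : ℝ) * n / 2) ≤ (d n : ℝ) := by
      have h2 : ((n * n : ℕ) : ℝ) ≤ ((2 * d n : ℕ) : ℝ) := Nat.cast_le.mpr (h n)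
      push_cast at h2
      linarith
    have hpos : (0 : ℝ) < (n : ℝ) * n / 2 := by nlinarith
    have hnum : Real.log ((n : ℝ) * n / 2) ≤ Real.log (d n) := Real.log_le_log hpos hdn
    have hval : Real.log ((n : ℝ) * n / 2) = 2 * Real.log n - Real.log 2 := by
      rw [Real.log_div (by nlinarith) two_ne_zero,
        Real.log_mul (by linarith) (by linarith)]
      ring
    have hgn : (2 * Real.log n - Real.log 2) / Real.log n
        = 2 - Real.log 2 / Real.log n := by
      rw [sub_div, mul_div_assoc, div_self (ne_of_gt hlogn), mul_one]
    rw [← hgn]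
    refine le_trans (le_of_eq ?_) ((div_le_div_iff_of_pos_right hlogn).mpr hnum)
    rw [hval]
  have hgt : Tendsto (fun n : ℕ => ((2 - Real.log 2 / Real.log n : ℝ) : EReal))
      atTop (nhds (2 : EReal)) := by
    have key : Tendsto (fun n : ℕ => 2 - Real.log 2 / Real.log n) atTop (nhds (2 : ℝ)) := by
      have h5 : Tendsto (fun n : ℕ => Real.log 2 / Real.log n) atTop (nhds 0) :=
        Tendsto.div_atTop tendsto_const_nhds
          (Real.tendsto_log_atTop.comp tendsto_natCast_atTop_atTop)
      have h6 := (tendsto_const_nhds (x := (2:ℝ))).sub h5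
      rw [sub_zero] at h6
      exact h6
    have h7 := EReal.tendsto_coe.mpr key
    have h8 : ((2 : ℝ) : EReal) = (2 : EReal) := by norm_cast
    rwa [h8] at h7
  calc (2 : EReal)
      = limsup (fun n : ℕ => ((2 - Real.log 2 / Real.log n : ℝ) : EReal)) atTop :=
        hgt.limsup_eq.symm
    _ ≤ limsup (fun n : ℕ => ((Real.log (d n) / Real.log n : ℝ) : EReal)) atTop :=
      limsup_le_limsup hgle

end BergmanGap

open BergmanGap in
/-- **Bergman's gap theorem.**  Let `k` be a field and `A` an associative unital `k`-algebra
generated by a finite-dimensional subspace `V` containing `1`.  With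
`FᶰA = k + V + V² + ⋯ + Vⁿ` and `γ = limsup_n (ln dim_k FⁿA / ln n)` (computed in the extended
reals), `γ` never lies in the open interval `(1, 2)`: either `γ ≤ 1` or `γ ≥ 2`.  In other
words, the Gelfand–Kirillov dimension is never strictly between `1` and `2`. -/
theorem bergman_gap_theorem (k : Type u) [Field k] (A : Type u) [Ring A] [Algebra k A]
    (V : Submodule k A) (hVfin : Module.Finite k ↥V) (hone : (1 : A) ∈ V)
    (hgen : Algebra.adjoin k (V : Set A) = ⊤) :
    (fun γ : EReal => γ ≤ 1 ∨ 2 ≤ γ)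
      (limsup (fun n : ℕ =>
        ((Real.log (Module.finrank k
          ↥((1 : Submodule k A) ⊔ ⨆ i ∈ Finset.Icc 1 n, V ^ i)) / Real.log n : ℝ) : EReal))
        atTop) := by
  classical
  simp only
  set d : ℕ → ℕ :=
    fun n => Module.finrank k ↥((1 : Submodule k A) ⊔ ⨆ i ∈ Finset.Icc 1 n, V ^ i) with hd
  rcases subsingleton_or_nontrivial A with hA | hA
  · left
    apply limsup_le_one_of_linear d 0
    intro n
    have : d n = 0 := by
      have : Subsingleton ↥((1 : Submodule k A) ⊔ ⨆ i ∈ Finset.Icc 1 n, V ^ i) :=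
        inferInstance
      exact Module.finrank_zero_of_subsingleton
    omega
  · haveI := hVfin
    set r := Module.finrank k ↥V with hrdef
    haveI hVnontriv : Nontrivial ↥V := by
      refine ⟨⟨1, hone⟩, 0, fun hc => ?_⟩
      have h0 : (1 : A) = 0 := congrArg Subtype.val hc
      exact one_ne_zero h0
    have hr : 1 ≤ r := Module.finrank_pos
    set bas := Module.finBasis k ↥V with hbas
    set x : Fin r → A := fun i => ((bas i : ↥V) : A) with hx
    have hxV : Submodule.span k (Set.range x) = V := by
      have h1 : Set.range x = V.subtype '' Set.range (fun i => bas i) := by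
        ext a
        simp only [hx, Set.mem_range, Set.mem_image, Submodule.coe_subtype]
        constructor
        · rintro ⟨i, rfl⟩; exact ⟨bas i, ⟨i, rfl⟩, rfl⟩
        · rintro ⟨v, ⟨i, rfl⟩, rfl⟩; exact ⟨i, rfl⟩
      rw [h1, ← Submodule.map_span, Module.Basis.span_eq, Submodule.map_subtype_top]
    have hFn : ∀ n : ℕ, ((1 : Submodule k A) ⊔ ⨆ i ∈ Finset.Icc 1 n, V ^ i)
        = Submodule.span k (phi x '' {w | w.length ≤ n}) := Fn_eq V x hxV
    haveI : Inhabited (Fin r) := ⟨⟨0, hr⟩⟩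
    by_cases hdich : ∃ N : ℕ, 1 ≤ N ∧ {w ∈ Red k x | w.length = N}.ncard ≤ N
    · left
      obtain ⟨N, hN1, hNcard⟩ := hdich
      obtain ⟨C, hC⟩ := factorial_bounded (Red k x) (red_factor hr x) N hN1 hNcard
      apply limsup_le_one_of_linear d C
      intro n
      have h1 : d n ≤ ((Red k x) ∩ {w | w.length ≤ n}).ncard := by
        have hdn : d n
            = Module.finrank k ↥(Submodule.span k (phi x '' {w | w.length ≤ n})) := by
          rw [hd]
          simp only
          rw [hFn n]
        rw [hdn]
        exact finrank_le_ncard hr x n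
      have h2 := ncard_le_linear (Red k x) C hC n
      omega
    · right
      push_neg at hdich
      apply two_le_limsup_of_quadratic d
      intro n
      have h1 : ((Red k x) ∩ {w | w.length ≤ n}).ncard ≤ d n := by
        have hdn : d n
            = Module.finrank k ↥(Submodule.span k (phi x '' {w | w.length ≤ n})) := by
          rw [hd]
          simp only
          rw [hFn n]
        have hfin : ((Red k x) ∩ {w | w.length ≤ n}).Finite :=
          (List.finite_length_le (Fin r) n).subset (fun w hw => hw.2)
        have hsubred : ↑hfin.toFinset ⊆ Red k x := by
          intro w hw
          simp only [Finset.mem_coe, Set.Finite.mem_toFinset] at hw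
          exact hw.1
        have hcle := card_le_finrank hr x hfin.toFinset hsubred
        have hspan : Submodule.span k (phi x '' ↑hfin.toFinset)
            ≤ Submodule.span k (phi x '' {w | w.length ≤ n}) := by
          apply Submodule.span_mono
          apply Set.image_mono
          intro w hw
          simp only [Finset.mem_coe, Set.Finite.mem_toFinset] at hw
          exact hw.2
        haveI := FiniteDimensional.span_of_finite k
          (((List.finite_length_le (Fin r) n).image (phi x)))
        have hmono := Submodule.finrank_mono hspan
        have hcard : hfin.toFinset.card = ((Red k x) ∩ {w | w.length ≤ n}).ncard :=
          (Set.ncard_eq_toFinset_card _ hfin).symm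
        omega
      have h2 := quad_le_ncard (Red k x) hdich n
      omega
end

section
/- Let S and S' be commutative ℕ-graded rings and let φ : S → S' be a graded ring homomorphism such that for some N the degree-n component φ_n : S_n → S'_n is bijective for all n ≥ N. Then φ induces an isomorphism of schemes Proj S' ≅ Proj S. In particular, if two commutative ℕ-graded rings agree (compatibly with multiplication) in all sufficiently large degrees, their Proj schemes are isomorphic. -/
open AlgebraicGeometry CategoryTheory HomogeneousLocalization

universe u

namespace ProjIsoAux

variable {S S' : Type u} [CommRing S] [CommRing S']
variable (𝒜 : ℕ → Submodule ℤ S) [GradedAlgebra 𝒜]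
variable (ℬ : ℕ → Submodule ℤ S') [GradedAlgebra ℬ]
variable (φ : S →+* S') (hgr : ∀ (n : ℕ) (a : S), a ∈ 𝒜 n → φ a ∈ ℬ n)

lemma powers_le (f : S) : Submonoid.powers f ≤ (Submonoid.powers (φ f)).comap φ := by
  rintro _ ⟨n, rfl⟩
  exact ⟨n, (map_pow φ f n).symm⟩

/-- The induced map on homogeneous localizations away from `f`. -/
noncomputable def ψ (f : S) : Away 𝒜 f →+* Away ℬ (φ f) :=
  HomogeneousLocalization.map (⟨φ, fun {i x} h => hgr i x h⟩ : 𝒜 →+*ᵍ ℬ)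
    (by rintro _ ⟨n, rfl⟩; exact ⟨n, (map_pow φ f n).symm⟩)

variable (N : ℕ)
variable (hbij : ∀ n ≥ N,
      Function.Bijective (fun a : 𝒜 n => (⟨φ a, hgr n a a.2⟩ : ℬ n)))

include hbij in
lemma inj_deg {d : ℕ} (hd : N ≤ d) {a : S} (ha : a ∈ 𝒜 d) (h0 : φ a = 0) : a = 0 := by
  have := (hbij d hd).1 (a₁ := ⟨a, ha⟩) (a₂ := ⟨0, zero_mem _⟩)
    (Subtype.ext (by simpa using h0))
  simpa using congrArg Subtype.val this

include hbij in
lemma surj_deg {d : ℕ} (hd : N ≤ d) {b : S'} (hb : b ∈ ℬ d) :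
    ∃ a ∈ 𝒜 d, φ a = b := by
  obtain ⟨⟨a, ha⟩, haeq⟩ := (hbij d hd).2 ⟨b, hb⟩
  exact ⟨a, ha, congrArg Subtype.val haeq⟩

include hbij in
lemma ψ_bijective {m : ℕ} {f : S} (hf : f ∈ 𝒜 m) (hm : 0 < m) (hN : N ≤ m) :
    Function.Bijective (ψ 𝒜 ℬ φ hgr f) := by
  constructor
  · rw [injective_iff_map_eq_zero]
    intro z hz
    obtain ⟨c, rfl⟩ := mk_surjective z
    obtain ⟨k, hk⟩ := c.den_mem
    have hz' : (Localization.mk (φ c.num) ⟨φ c.den, powers_le φ f c.den_mem⟩ :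
        Localization (Submonoid.powers (φ f))) = 0 := by
      have := congrArg HomogeneousLocalization.val hz
      rwa [ψ, HomogeneousLocalization.map_mk, val_mk, val_zero] at this
    rw [← Localization.mk_zero (1 : Submonoid.powers (φ f)), Localization.mk_eq_mk_iff,
      Localization.r_iff_exists] at hz'
    obtain ⟨⟨_, t, rfl⟩, ht⟩ := hz'
    simp only [OneMemClass.coe_one, one_mul, mul_zero] at ht
    have h2 : φ f ^ (t + 1) * φ (c.num : S) = 0 := by
      rw [pow_succ, mul_right_comm, ht, zero_mul]
    have key : f ^ (t + 1) * (c.num : S) = 0 := by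
      apply inj_deg 𝒜 ℬ φ hgr N hbij (d := (t + 1) * m + c.deg)
        (le_trans hN (le_trans (Nat.le_mul_of_pos_left m t.succ_pos) (Nat.le_add_right _ _)))
      · exact SetLike.mul_mem_graded
          (by simpa [smul_eq_mul] using SetLike.pow_mem_graded (t + 1) hf) c.num.2
      · rw [map_mul, map_pow]; exact h2
    apply val_injective
    rw [val_mk, val_zero, ← Localization.mk_zero (1 : Submonoid.powers f),
      Localization.mk_eq_mk_iff, Localization.r_iff_exists]
    refine ⟨⟨f ^ (t + 1), t + 1, rfl⟩, ?_⟩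
    simpa using key
  · intro z
    have hφf : φ f ∈ ℬ m := hgr m f hf
    obtain ⟨n, hn1, b, hb, hbeq⟩ : ∃ n, 1 ≤ n ∧ ∃ b ∈ ℬ (n • m),
        algebraMap S' (Localization (Submonoid.powers (φ f))) b = (φ f) ^ n • z.val := by
      obtain ⟨n, hn1, hmem⟩ :=
        ((Filter.eventually_ge_atTop 1).and (Away.eventually_smul_mem hφf z)).exists
      obtain ⟨b, hb, hbeq⟩ := hmem
      exact ⟨n, hn1, b, hb, hbeq⟩
    obtain ⟨a, ha, haeq⟩ := surj_deg 𝒜 ℬ φ hgr N hbij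
      (d := n * m) (le_trans hN (Nat.le_mul_of_pos_left m hn1)) (by simpa [smul_eq_mul] using hb)
    refine ⟨mk ⟨n * m, ⟨a, ha⟩, ⟨f ^ n, by simpa [smul_eq_mul] using SetLike.pow_mem_graded n hf⟩,
      ⟨n, rfl⟩⟩, ?_⟩
    apply val_injective
    rw [ψ, HomogeneousLocalization.map_mk, val_mk]
    erw [show (⟨φ (f ^ n), powers_le φ f ⟨n, rfl⟩⟩ : Submonoid.powers (φ f)) =
      ⟨(φ f) ^ n, ⟨n, rfl⟩⟩ from Subtype.ext (map_pow φ f n)]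
    rw [Localization.mk_eq_mk', IsLocalization.mk'_eq_iff_eq_mul]
    show (algebraMap S' (Localization (Submonoid.powers (φ f)))) (φ a) =
      z.val * (algebraMap S' (Localization (Submonoid.powers (φ f)))) ((φ f) ^ n)
    rw [haeq, hbeq, Algebra.smul_def, mul_comm]

lemma ψ_awayMap_comm {m' : ℕ} {f g : S} (hg : g ∈ 𝒜 m') {x : S} (hx : x = f * g) :
    (ψ 𝒜 ℬ φ hgr x).comp (HomogeneousLocalization.awayMap 𝒜 hg hx) =
      (HomogeneousLocalization.awayMap ℬ (hgr m' g hg)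
        (show φ x = φ f * φ g by rw [hx, map_mul])).comp (ψ 𝒜 ℬ φ hgr f) := by
  ext z
  obtain ⟨⟨d, ⟨a, ha⟩, ⟨b, hb⟩, k, (rfl : f ^ k = b)⟩, rfl⟩ := mk_surjective z
  rw [RingHom.comp_apply, RingHom.comp_apply]
  have h1 : HomogeneousLocalization.awayMap 𝒜 hg hx (mk ⟨d, ⟨a, ha⟩, ⟨f ^ k, hb⟩, ⟨k, rfl⟩⟩) =
      (mk ⟨d + k • m', ⟨a * g ^ k, SetLike.mul_mem_graded ha (SetLike.pow_mem_graded k hg)⟩,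
        ⟨x ^ k, by rw [hx, mul_pow]; exact SetLike.mul_mem_graded hb (SetLike.pow_mem_graded k hg)⟩,
        ⟨k, rfl⟩⟩ : Away 𝒜 x) := by
    apply val_injective
    rw [val_awayMap_mk, val_mk]
  rw [h1, ψ, ψ, HomogeneousLocalization.map_mk, HomogeneousLocalization.map_mk]
  have h2 : (mk ⟨d, ⟨φ a, hgr d a ha⟩, ⟨φ (f ^ k), hgr d _ hb⟩,
        powers_le φ f ⟨k, rfl⟩⟩ : Away ℬ (φ f)) =
      (mk ⟨d, ⟨φ a, hgr d a ha⟩, ⟨(φ f) ^ k, by rw [← map_pow]; exact hgr d _ hb⟩,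
        ⟨k, rfl⟩⟩ : Away ℬ (φ f)) := by
    apply val_injective
    rw [val_mk, val_mk]
    congr 1
    exact Subtype.ext (map_pow φ f k)
  erw [h2]
  rw [val_mk, val_awayMap_mk]
  rw [Localization.mk_eq_mk_iff, Localization.r_iff_exists]
  refine ⟨1, ?_⟩
  simp only [OneMemClass.coe_one, one_mul, map_mul, map_pow]
  rfl

lemma exists_homog_not_mem (x : ProjectiveSpectrum 𝒜) :
    ∃ (m : ℕ) (f : S), 0 < m ∧ f ∈ 𝒜 m ∧ f ∉ x.asHomogeneousIdeal := by
  classical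
  by_contra h
  push_neg at h
  apply x.not_irrelevant_le
  intro z hz
  rw [← DirectSum.sum_support_decompose 𝒜 z]
  refine Ideal.sum_mem _ fun c hc => ?_
  rcases Nat.eq_zero_or_pos c with rfl | hc0
  · have : (DirectSum.decompose 𝒜 z 0 : S) = 0 := by
      simpa [GradedRing.proj_apply] using (HomogeneousIdeal.mem_irrelevant_iff 𝒜 z).mp hz
    rw [this]
    exact zero_mem _
  · exact h c _ hc0 (SetLike.coe_mem _)

/-- Index type: homogeneous elements of `S` of degree `> N`. -/
@[reducible]
def Idx : Type u := {p : ℕ × S // p.2 ∈ 𝒜 p.1 ∧ N < p.1}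

lemma Idx.pos (i : Idx 𝒜 N) : 0 < i.1.1 := lt_of_le_of_lt (Nat.zero_le N) i.2.2

lemma exists_idx_A (x : ProjectiveSpectrum 𝒜) :
    ∃ i : Idx 𝒜 N, i.1.2 ∉ x.asHomogeneousIdeal := by
  obtain ⟨m, f, hm, hf, hfx⟩ := exists_homog_not_mem 𝒜 x
  refine ⟨⟨((N + 1) * m, f ^ (N + 1)),
    by simpa [smul_eq_mul] using SetLike.pow_mem_graded (N + 1) hf,
    lt_of_lt_of_le (Nat.lt_succ_self N) (Nat.le_mul_of_pos_right _ hm)⟩, fun hmem => ?_⟩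
  exact hfx (x.isPrime.mem_of_pow_mem _ hmem)

include hbij in
lemma exists_idx_B (x : ProjectiveSpectrum ℬ) :
    ∃ i : Idx 𝒜 N, φ i.1.2 ∉ x.asHomogeneousIdeal := by
  obtain ⟨m, b, hm, hb, hbx⟩ := exists_homog_not_mem ℬ x
  have hbN : b ^ (N + 1) ∈ ℬ ((N + 1) * m) := by
    simpa [smul_eq_mul] using SetLike.pow_mem_graded (N + 1) hb
  obtain ⟨a, ha, haeq⟩ := surj_deg 𝒜 ℬ φ hgr N hbij
    (le_trans (Nat.le_succ N) (Nat.le_mul_of_pos_right _ hm)) hbN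
  refine ⟨⟨((N + 1) * m, a), ha,
    lt_of_lt_of_le (Nat.lt_succ_self N) (Nat.le_mul_of_pos_right _ hm)⟩, fun hmem => ?_⟩
  rw [haeq] at hmem
  exact hbx (x.isPrime.mem_of_pow_mem _ hmem)

lemma awayι_congr {f : S} {m m' : ℕ} (h1 : f ∈ 𝒜 m) (p1 : 0 < m) (h2 : f ∈ 𝒜 m')
    (p2 : 0 < m') : Proj.awayι 𝒜 f h1 p1 = Proj.awayι 𝒜 f h2 p2 := rfl

/-- The open cover of `Proj 𝒜` by basic opens of degree `> N`. -/
@[reducible]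
noncomputable def coverA : (AlgebraicGeometry.Proj 𝒜).OpenCover where
  I₀ := Idx 𝒜 N
  X i := Spec (CommRingCat.of (Away 𝒜 i.1.2))
  f i := Proj.awayι 𝒜 i.1.2 i.2.1 i.pos
  mem₀ := (Scheme.Cover.mkOfCovers (Idx 𝒜 N) (fun i => Spec (CommRingCat.of (Away 𝒜 i.1.2)))
    (fun i => Proj.awayι 𝒜 i.1.2 i.2.1 i.pos) fun x => by
    have h := (exists_idx_A 𝒜 N x).choose_spec
    have : x ∈ (Proj.awayι 𝒜 _ ((exists_idx_A 𝒜 N x).choose.2.1)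
        ((exists_idx_A 𝒜 N x).choose.pos)).opensRange := by
      rw [Proj.opensRange_awayι]
      exact h
    obtain ⟨y, hy⟩ := this
    exact ⟨_, y, hy⟩).mem₀

include hbij in
lemma coverB_exists (x : ProjectiveSpectrum ℬ) :
    ∃ i : Idx 𝒜 N, φ i.1.2 ∉ x.asHomogeneousIdeal := exists_idx_B 𝒜 ℬ φ hgr N hbij x

/-- The open cover of `Proj ℬ` by basic opens of images of elements of degree `> N`. -/
@[reducible]
noncomputable def coverB
    (hbij : ∀ n ≥ N, Function.Bijective (fun a : 𝒜 n => (⟨φ a, hgr n a a.2⟩ : ℬ n))) :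
    (AlgebraicGeometry.Proj ℬ).OpenCover where
  I₀ := Idx 𝒜 N
  X i := Spec (CommRingCat.of (Away ℬ (φ i.1.2)))
  f i := Proj.awayι ℬ (φ i.1.2) (hgr _ _ i.2.1) i.pos
  mem₀ := (Scheme.Cover.mkOfCovers (Idx 𝒜 N) (fun i => Spec (CommRingCat.of (Away ℬ (φ i.1.2))))
    (fun i => Proj.awayι ℬ (φ i.1.2) (hgr _ _ i.2.1) i.pos) fun x => by
    have h := (coverB_exists 𝒜 ℬ φ hgr N hbij x).choose_spec
    have : x ∈ (Proj.awayι ℬ _ (hgr _ _ ((coverB_exists 𝒜 ℬ φ hgr N hbij x).choose.2.1))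
        ((coverB_exists 𝒜 ℬ φ hgr N hbij x).choose.pos)).opensRange := by
      rw [Proj.opensRange_awayι]
      exact h
    obtain ⟨y, hy⟩ := this
    exact ⟨_, y, hy⟩).mem₀

lemma compat_aux {mf mg : ℕ} {f g : S} (hf : f ∈ 𝒜 mf) (pf : 0 < mf) (hg : g ∈ 𝒜 mg)
    (pg : 0 < mg) :
    Limits.pullback.fst (Proj.awayι ℬ (φ f) (hgr _ _ hf) pf)
        (Proj.awayι ℬ (φ g) (hgr _ _ hg) pg) ≫
      (Spec.map (CommRingCat.ofHom (ψ 𝒜 ℬ φ hgr f)) ≫ Proj.awayι 𝒜 f hf pf) =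
    Limits.pullback.snd _ _ ≫
      (Spec.map (CommRingCat.ofHom (ψ 𝒜 ℬ φ hgr g)) ≫ Proj.awayι 𝒜 g hg pg) := by
  have hφ : φ (f * g) = φ f * φ g := map_mul φ f g
  rw [← Proj.pullbackAwayιIso_hom_SpecMap_awayMap_left ℬ (hgr _ _ hf) pf (hgr _ _ hg) pg hφ,
    ← Proj.pullbackAwayιIso_hom_SpecMap_awayMap_right ℬ (hgr _ _ hf) pf (hgr _ _ hg) pg hφ]
  simp only [Category.assoc]
  rw [cancel_epi]
  rw [← Category.assoc, ← Spec.map_comp, ← Category.assoc, ← Spec.map_comp]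
  have eL : (CommRingCat.ofHom (ψ 𝒜 ℬ φ hgr f) ≫
        CommRingCat.ofHom (HomogeneousLocalization.awayMap ℬ (hgr _ _ hg) hφ) :
        CommRingCat.of (Away 𝒜 f) ⟶ CommRingCat.of (Away ℬ (φ (f * g)))) =
      CommRingCat.ofHom (HomogeneousLocalization.awayMap 𝒜 hg rfl) ≫
        CommRingCat.ofHom (ψ 𝒜 ℬ φ hgr (f * g)) :=
    congrArg CommRingCat.ofHom (ψ_awayMap_comm 𝒜 ℬ φ hgr hg rfl).symm
  have eR : (CommRingCat.ofHom (ψ 𝒜 ℬ φ hgr g) ≫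
        CommRingCat.ofHom (HomogeneousLocalization.awayMap ℬ (hgr _ _ hf)
          (hφ.trans (mul_comm _ _))) :
        CommRingCat.of (Away 𝒜 g) ⟶ CommRingCat.of (Away ℬ (φ (f * g)))) =
      CommRingCat.ofHom (HomogeneousLocalization.awayMap 𝒜 hf (mul_comm f g)) ≫
        CommRingCat.ofHom (ψ 𝒜 ℬ φ hgr (f * g)) :=
    congrArg CommRingCat.ofHom (ψ_awayMap_comm 𝒜 ℬ φ hgr hf (mul_comm f g)).symm
  rw [eL, eR, Spec.map_comp, Spec.map_comp, Category.assoc, Category.assoc,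
    Proj.SpecMap_awayMap_awayι, Proj.SpecMap_awayMap_awayι]
  rfl

include hbij in
/-- Inverse of `ψ` in degrees where it is bijective. -/
noncomputable def σgen {m : ℕ} {f : S} (hf : f ∈ 𝒜 m) (pm : 0 < m) (hNm : N ≤ m) :
    Away 𝒜 f ≃+* Away ℬ (φ f) :=
  RingEquiv.ofBijective (ψ 𝒜 ℬ φ hgr f) (ψ_bijective 𝒜 ℬ φ hgr N hbij hf pm hNm)

include hbij in
lemma ρ_awayMap_comm {m m' : ℕ} {f g : S} (hf : f ∈ 𝒜 m) (pf : 0 < m) (hNf : N ≤ m)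
    (hg : g ∈ 𝒜 m') (pg : 0 < m') (hNg : N ≤ m') {x : S} (hx : x = f * g) :
    (HomogeneousLocalization.awayMap 𝒜 hg hx).comp
        ((σgen 𝒜 ℬ φ hgr N hbij hf pf hNf).symm.toRingHom) =
      ((σgen 𝒜 ℬ φ hgr N hbij (hx ▸ SetLike.mul_mem_graded hf hg)
          (pf.trans_le (m.le_add_right m')) (hNf.trans (m.le_add_right m'))).symm.toRingHom).comp
        (HomogeneousLocalization.awayMap ℬ (hgr m' g hg)
          (show φ x = φ f * φ g by rw [hx, map_mul])) := by
  ext z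
  obtain ⟨w, rfl⟩ := (σgen 𝒜 ℬ φ hgr N hbij hf pf hNf).surjective z
  have h1 : ((σgen 𝒜 ℬ φ hgr N hbij hf pf hNf).symm)
      ((σgen 𝒜 ℬ φ hgr N hbij hf pf hNf) w) = w := RingEquiv.symm_apply_apply _ _
  simp only [RingHom.comp_apply, RingEquiv.toRingHom_eq_coe, RingHom.coe_coe, h1]
  have h2 : (σgen 𝒜 ℬ φ hgr N hbij hf pf hNf) w = ψ 𝒜 ℬ φ hgr f w := rfl
  rw [h2]
  have h3 := RingHom.congr_fun (ψ_awayMap_comm 𝒜 ℬ φ hgr hg hx) w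
  simp only [RingHom.comp_apply] at h3
  rw [← h3]
  exact congrArg HomogeneousLocalization.val (RingEquiv.symm_apply_apply
    (σgen 𝒜 ℬ φ hgr N hbij (hx ▸ SetLike.mul_mem_graded hf hg)
      (pf.trans_le (m.le_add_right m')) (hNf.trans (m.le_add_right m')))
    ((HomogeneousLocalization.awayMap 𝒜 hg hx) w)).symm

include hbij in
lemma compat_auxG {mf mg : ℕ} {f g : S} (hf : f ∈ 𝒜 mf) (pf : 0 < mf) (hNf : N ≤ mf)
    (hg : g ∈ 𝒜 mg) (pg : 0 < mg) (hNg : N ≤ mg) :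
    Limits.pullback.fst (Proj.awayι 𝒜 f hf pf) (Proj.awayι 𝒜 g hg pg) ≫
      (Spec.map (CommRingCat.ofHom (σgen 𝒜 ℬ φ hgr N hbij hf pf hNf).symm.toRingHom) ≫
        Proj.awayι ℬ (φ f) (hgr _ _ hf) pf) =
    Limits.pullback.snd _ _ ≫
      (Spec.map (CommRingCat.ofHom (σgen 𝒜 ℬ φ hgr N hbij hg pg hNg).symm.toRingHom) ≫
        Proj.awayι ℬ (φ g) (hgr _ _ hg) pg) := by
  have hφ : φ (f * g) = φ f * φ g := map_mul φ f g
  rw [← Proj.pullbackAwayιIso_hom_SpecMap_awayMap_left 𝒜 hf pf hg pg rfl,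
    ← Proj.pullbackAwayιIso_hom_SpecMap_awayMap_right 𝒜 hf pf hg pg rfl]
  simp only [Category.assoc]
  rw [cancel_epi]
  rw [← Category.assoc, ← Spec.map_comp, ← Category.assoc, ← Spec.map_comp]
  have eL : (CommRingCat.ofHom (σgen 𝒜 ℬ φ hgr N hbij hf pf hNf).symm.toRingHom ≫
        CommRingCat.ofHom (HomogeneousLocalization.awayMap 𝒜 hg rfl) :
        CommRingCat.of (Away ℬ (φ f)) ⟶ CommRingCat.of (Away 𝒜 (f * g))) =
      CommRingCat.ofHom (HomogeneousLocalization.awayMap ℬ (hgr _ _ hg) hφ) ≫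
        CommRingCat.ofHom (σgen 𝒜 ℬ φ hgr N hbij
          ((rfl : f * g = f * g) ▸ SetLike.mul_mem_graded hf hg)
          (pf.trans_le (mf.le_add_right mg)) (hNf.trans (mf.le_add_right mg))).symm.toRingHom :=
    congrArg CommRingCat.ofHom (ρ_awayMap_comm 𝒜 ℬ φ hgr N hbij hf pf hNf hg pg hNg rfl)
  have eR : (CommRingCat.ofHom (σgen 𝒜 ℬ φ hgr N hbij hg pg hNg).symm.toRingHom ≫
        CommRingCat.ofHom (HomogeneousLocalization.awayMap 𝒜 hf (mul_comm f g)) :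
        CommRingCat.of (Away ℬ (φ g)) ⟶ CommRingCat.of (Away 𝒜 (f * g))) =
      CommRingCat.ofHom (HomogeneousLocalization.awayMap ℬ (hgr _ _ hf)
        (show φ (f * g) = φ g * φ f by rw [map_mul, mul_comm])) ≫
        CommRingCat.ofHom (σgen 𝒜 ℬ φ hgr N hbij
          ((mul_comm f g : f * g = g * f) ▸ SetLike.mul_mem_graded hg hf)
          (pg.trans_le (mg.le_add_right mf)) (hNg.trans (mg.le_add_right mf))).symm.toRingHom :=
    congrArg CommRingCat.ofHom (ρ_awayMap_comm 𝒜 ℬ φ hgr N hbij hg pg hNg hf pf hNf (mul_comm f g))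
  rw [eL, eR, Spec.map_comp, Spec.map_comp, Category.assoc, Category.assoc,
    Proj.SpecMap_awayMap_awayι, Proj.SpecMap_awayMap_awayι]
  rfl

variable (hbij : ∀ n ≥ N,
      Function.Bijective (fun a : 𝒜 n => (⟨φ a, hgr n a a.2⟩ : ℬ n))) in
/-- The glued morphism `Proj ℬ ⟶ Proj 𝒜`. -/
noncomputable def Fmor : AlgebraicGeometry.Proj ℬ ⟶ AlgebraicGeometry.Proj 𝒜 :=
  (coverB 𝒜 ℬ φ hgr N hbij).glueMorphisms
    (fun i => Spec.map (CommRingCat.ofHom (ψ 𝒜 ℬ φ hgr i.1.2)) ≫ (coverA 𝒜 N).f i)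
    (fun i j => compat_aux 𝒜 ℬ φ hgr i.2.1 i.pos j.2.1 j.pos)

variable (hbij : ∀ n ≥ N,
      Function.Bijective (fun a : 𝒜 n => (⟨φ a, hgr n a a.2⟩ : ℬ n))) in
/-- The glued morphism `Proj 𝒜 ⟶ Proj ℬ`. -/
noncomputable def Gmor : AlgebraicGeometry.Proj 𝒜 ⟶ AlgebraicGeometry.Proj ℬ :=
  (coverA 𝒜 N).glueMorphisms
    (fun i => Spec.map (CommRingCat.ofHom
        (σgen 𝒜 ℬ φ hgr N hbij i.2.1 i.pos (le_of_lt i.2.2)).symm.toRingHom) ≫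
      (coverB 𝒜 ℬ φ hgr N hbij).f i)
    (fun i j => compat_auxG 𝒜 ℬ φ hgr N hbij i.2.1 i.pos (le_of_lt i.2.2)
      j.2.1 j.pos (le_of_lt j.2.2))

include hbij in
lemma FG : Fmor 𝒜 ℬ φ hgr N hbij ≫ Gmor 𝒜 ℬ φ hgr N hbij = 𝟙 _ := by
  apply (coverB 𝒜 ℬ φ hgr N hbij).hom_ext
  intro i
  rw [Category.comp_id, ← Category.assoc, Fmor, Scheme.Cover.ι_glueMorphisms,
    Category.assoc, Gmor, Scheme.Cover.ι_glueMorphisms]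
  rw [← Category.assoc, ← Spec.map_comp]
  have : (CommRingCat.ofHom (σgen 𝒜 ℬ φ hgr N hbij i.2.1 i.pos (le_of_lt i.2.2)).symm.toRingHom ≫
      CommRingCat.ofHom (ψ 𝒜 ℬ φ hgr i.1.2) :
      CommRingCat.of (Away ℬ (φ i.1.2)) ⟶ CommRingCat.of (Away ℬ (φ i.1.2))) = 𝟙 _ := by
    apply congrArg CommRingCat.ofHom
    ext z
    exact congrArg HomogeneousLocalization.val
      ((σgen 𝒜 ℬ φ hgr N hbij i.2.1 i.pos (le_of_lt i.2.2)).apply_symm_apply z)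
  rw [this, Spec.map_id]
  exact Category.id_comp _

include hbij in
lemma GF : Gmor 𝒜 ℬ φ hgr N hbij ≫ Fmor 𝒜 ℬ φ hgr N hbij = 𝟙 _ := by
  apply (coverA 𝒜 N).hom_ext
  intro i
  rw [Category.comp_id, ← Category.assoc, Gmor, Scheme.Cover.ι_glueMorphisms,
    Category.assoc, Fmor, Scheme.Cover.ι_glueMorphisms]
  rw [← Category.assoc, ← Spec.map_comp]
  have : (CommRingCat.ofHom (ψ 𝒜 ℬ φ hgr i.1.2) ≫
      CommRingCat.ofHom (σgen 𝒜 ℬ φ hgr N hbij i.2.1 i.pos (le_of_lt i.2.2)).symm.toRingHom :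
      CommRingCat.of (Away 𝒜 i.1.2) ⟶ CommRingCat.of (Away 𝒜 i.1.2)) = 𝟙 _ := by
    apply congrArg CommRingCat.ofHom
    ext z
    exact congrArg HomogeneousLocalization.val
      ((σgen 𝒜 ℬ φ hgr N hbij i.2.1 i.pos (le_of_lt i.2.2)).symm_apply_apply z)
  rw [this, Spec.map_id]
  exact Category.id_comp _

end ProjIsoAux


open AlgebraicGeometry CategoryTheory

/-- Let `S` and `S'` be commutative `ℕ`-graded rings (graded by submodules over `ℤ`, i.e. by
additive subgroups) and let `φ : S → S'` be a graded ring homomorphism which is bijective in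
all degrees `n ≥ N` for some `N`.  Then `Proj S'` is isomorphic to `Proj S` as a scheme.
In particular, two commutative `ℕ`-graded rings agreeing (compatibly) in all large degrees
have isomorphic `Proj`. -/
theorem proj_iso_of_eventually_bijective
    {S S' : Type u} [CommRing S] [CommRing S']
    (𝒜 : ℕ → Submodule ℤ S) [GradedAlgebra 𝒜]
    (ℬ : ℕ → Submodule ℤ S') [GradedAlgebra ℬ]
    (φ : S →+* S') (hgr : ∀ (n : ℕ) (a : S), a ∈ 𝒜 n → φ a ∈ ℬ n)
    (N : ℕ)
    (hbij : ∀ n ≥ N,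
      Function.Bijective (fun a : 𝒜 n => (⟨φ a, hgr n a a.2⟩ : ℬ n))) :
    Nonempty (AlgebraicGeometry.Proj ℬ ≅ AlgebraicGeometry.Proj 𝒜) := by
  exact ⟨{ hom := ProjIsoAux.Fmor 𝒜 ℬ φ hgr N hbij
           inv := ProjIsoAux.Gmor 𝒜 ℬ φ hgr N hbij
           hom_inv_id := ProjIsoAux.FG 𝒜 ℬ φ hgr N hbij
           inv_hom_id := ProjIsoAux.GF 𝒜 ℬ φ hgr N hbij }⟩
end
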